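/- Existence and uniqueness of the nc difference-differential value: Let Ω be an nc set over Gr^{(d;m)}(A), f : Ω → M(B) an nc function, and (u,v) ∈ [m-d]×[d]. Suppose σ ∈ Ω_n, σ' ∈ Ω_{n'} and X ∈ M_{n,n'}(A) satisfy (σ;σ')_{u,v}(X) ∈ Ω_{n+n'}. Then there exists a unique H ∈ M_{n,n'}(B) such that f((σ;σ')_{u,v}(X)) = [[f(σ), H],[0, f(σ')]]. -/
import Mathlib


open Matrix

/-- `n × n` matrices over `A`. -/
abbrev Mat (A : Type) (n : ℕ) : Type := Matrix (Fin n) (Fin n) A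

/-- `m × m` block matrices with `n × n` blocks over `A`, i.e. `M_m(M_n(A))`. -/
abbrev BMat (A : Type) (m n : ℕ) : Type := Matrix (Fin m) (Fin m) (Mat A n)

section NC

variable {R : Type} [CommRing R] {A : Type} [Ring A]

/-- Membership in the subgroup `H^{(d;m)}_n(A)` of invertible block lower-triangular
matrices `[[X,0],[Y,Z]]` with `X ∈ GL_{m-d}`, `Z ∈ GL_d`. -/
def memH (m d n : ℕ) (hd : d ≤ m) (Γ : BMat A m n) : Prop :=
  IsUnit Γ ∧
  (∀ i j : Fin m, (i : ℕ) < m - d → m - d ≤ (j : ℕ) → Γ i j = 0) ∧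
  IsUnit (Matrix.of fun i j : Fin (m - d) =>
    Γ ⟨(i : ℕ), lt_of_lt_of_le i.isLt (Nat.sub_le m d)⟩
      ⟨(j : ℕ), lt_of_lt_of_le j.isLt (Nat.sub_le m d)⟩) ∧
  IsUnit (Matrix.of fun i j : Fin d =>
    Γ ⟨m - d + (i : ℕ), by have := i.isLt; omega⟩
      ⟨m - d + (j : ℕ), by have := j.isLt; omega⟩)

/-- The relation `X ~ Y` iff `X = Y Γ` for some `Γ ∈ H^{(d;m)}_n(A)`. -/
def grel (m d n : ℕ) (hd : d ≤ m) (X Y : BMat A m n) : Prop :=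
  ∃ Γ : BMat A m n, memH m d n hd Γ ∧ X = Y * Γ

/-- Direct sum of square matrices. -/
def dsumMat {n n' : ℕ} (X : Mat A n) (Y : Mat A n') : Mat A (n + n') :=
  Matrix.reindex finSumFinEquiv finSumFinEquiv (Matrix.fromBlocks X 0 0 Y)

/-- Entrywise block direct sum `X ⊕̃ Y` of elements of `M_m(M_n(A))`, `M_m(M_{n'}(A))`. -/
def dsum {m n n' : ℕ} (X : BMat A m n) (Y : BMat A m n') : BMat A m (n + n') :=
  Matrix.of fun i j => dsumMat (X i j) (Y i j)

/-- Direct sum of square matrices with entries in a module. -/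
def dsumW {W : Type} [AddCommMonoid W] {n n' : ℕ}
    (X : Matrix (Fin n) (Fin n) W) (Y : Matrix (Fin n') (Fin n') W) :
    Matrix (Fin (n + n')) (Fin (n + n')) W :=
  Matrix.reindex finSumFinEquiv finSumFinEquiv (Matrix.fromBlocks X 0 0 Y)

/-- Block upper triangular matrix `[[P, H],[0, Q]]`. -/
def triW {W : Type} [AddCommMonoid W] {n n' : ℕ}
    (P : Matrix (Fin n) (Fin n) W) (H : Matrix (Fin n) (Fin n') W)
    (Q : Matrix (Fin n') (Fin n') W) :
    Matrix (Fin (n + n')) (Fin (n + n')) W :=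
  Matrix.reindex finSumFinEquiv finSumFinEquiv (Matrix.fromBlocks P H 0 Q)

/-- The unipotent upper triangular matrix `[[I, T],[0, I]]` over `R`. -/
def uptri (R : Type) [CommRing R] {p q : ℕ} (T : Matrix (Fin p) (Fin q) R) :
    Matrix (Fin (p + q)) (Fin (p + q)) R :=
  Matrix.reindex finSumFinEquiv finSumFinEquiv (Matrix.fromBlocks 1 T 0 1)

/-- Left multiplication of a representative by `s^{⊕ m}` for a scalar matrix `s` over `R`:
the similarity action on the nc Grassmannian. -/
def simAct [Algebra R A] {m N : ℕ} (s : Matrix (Fin N) (Fin N) R) (X : BMat A m N) :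
    BMat A m N :=
  Matrix.of fun i j => s.map (algebraMap R A) * X i j

/-- Multiplication of a matrix over an `R`-module `W` by a matrix over `R` on the left. -/
def rmulL {W : Type} [AddCommMonoid W] [Module R W] {p q r : ℕ}
    (s : Matrix (Fin p) (Fin q) R) (X : Matrix (Fin q) (Fin r) W) :
    Matrix (Fin p) (Fin r) W :=
  Matrix.of fun i j => ∑ k, s i k • X k j

/-- Multiplication of a matrix over an `R`-module `W` by a matrix over `R` on the right. -/
def rmulR {W : Type} [AddCommMonoid W] [Module R W] {p q r : ℕ}
    (X : Matrix (Fin p) (Fin q) W) (s : Matrix (Fin q) (Fin r) R) :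
    Matrix (Fin p) (Fin r) W :=
  Matrix.of fun i j => ∑ k, s k j • X i k

/-- Vertical concatenation of matrices. -/
def vcat {α : Type} {p p' q : ℕ} (X : Matrix (Fin p) (Fin q) α)
    (Y : Matrix (Fin p') (Fin q) α) : Matrix (Fin (p + p')) (Fin q) α :=
  Matrix.of fun i j =>
    if h : (i : ℕ) < p then X ⟨(i : ℕ), h⟩ j
    else Y ⟨(i : ℕ) - p, by have := i.isLt; omega⟩ j

/-- The affine embedding `X ↦ [[0, I],[I, X]]` in the case `(d;m) = (1;2)`. -/
def affEmb {n : ℕ} (X : Mat A n) : BMat A 2 n := !![0, 1; 1, X]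

/-- The matrix `[[0, X],[0, 0]] ∈ M_{n+n'}(A)` with `X ∈ M_{n,n'}(A)` in the upper right
corner. -/
def cornerMat {n n' : ℕ} (X : Matrix (Fin n) (Fin n') A) : Mat A (n + n') :=
  Matrix.reindex finSumFinEquiv finSumFinEquiv (Matrix.fromBlocks 0 X 0 0)

/-- The representative `(P;Q)_{u,v}(X)` of the element `(σ;σ')_{u,v}(X)`:
`P ⊕̃ Q + Σ_{j=1}^d [[0, X Q_{v, m-d+j}],[0,0]] ⊗ e^{(m)}_{d+u, m-d+j}`. -/
def ins {m d n n' : ℕ} (hd : d ≤ m) (u : Fin (m - d)) (v : Fin d)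
    (P : BMat A m n) (Q : BMat A m n') (X : Matrix (Fin n) (Fin n') A) :
    BMat A m (n + n') :=
  dsum P Q + Matrix.of fun (i j : Fin m) =>
    if (i : ℕ) = d + (u : ℕ) ∧ m - d ≤ (j : ℕ) then
      cornerMat (X * Q ⟨(v : ℕ), lt_of_lt_of_le v.isLt hd⟩ j)
    else 0

/-- The matrix unit `e^{(md,d)}_{u,v} ⊗ X`. -/
def eMat {md d : ℕ} {n : ℕ} (u : Fin md) (v : Fin d) (X : Mat A n) :
    Matrix (Fin md) (Fin d) (Mat A n) :=
  Matrix.of fun i j => if i = u ∧ j = v then X else 0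

/-- The block matrix `[[I_d ⊗ I_n, 0],[-Y, I_{m-d} ⊗ I_n]]` used to define `σ(Y)`. -/
def shiftMat {m d n : ℕ} (hd : d ≤ m) (Y : Matrix (Fin (m - d)) (Fin d) (Mat A n)) :
    BMat A m n :=
  Matrix.of fun i j =>
    (if i = j then (1 : Mat A n) else 0) +
    (if h : d ≤ (i : ℕ) ∧ (j : ℕ) < d then
      -Y ⟨(i : ℕ) - d, by have := i.isLt; omega⟩ ⟨(j : ℕ), h.2⟩
    else 0)

/-- A family `C` of sets of representatives is an nc set over `Gr^{(d;m)}(A)`: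
it consists of invertible matrices, is saturated under the relation `~`
(i.e. it is a set of equivalence classes), and is closed under direct sums. -/
def IsNCSetCarrier {m d : ℕ} (hd : d ≤ m) (C : ∀ n, Set (BMat A m n)) : Prop :=
  (∀ n, ∀ a ∈ C n, IsUnit a) ∧
  (∀ n, ∀ a b : BMat A m n, grel m d n hd a b → (a ∈ C n ↔ b ∈ C n)) ∧
  (∀ n n', ∀ a ∈ C n, ∀ b ∈ C n', dsum a b ∈ C (n + n'))

/-- `f` is an nc function on the nc set (with carrier) `C` over `Gr^{(d;m)}(A)`:
it descends to equivalence classes, preserves direct sums, and is similarity preserving. -/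
def IsNCFun (R : Type) [CommRing R] [Algebra R A] {W : Type} [AddCommMonoid W] [Module R W]
    {m d : ℕ} (hd : d ≤ m) (C : ∀ n, Set (BMat A m n))
    (f : ∀ n, BMat A m n → Matrix (Fin n) (Fin n) W) : Prop :=
  (∀ n, ∀ a ∈ C n, ∀ b ∈ C n, grel m d n hd a b → f n a = f n b) ∧
  (∀ n n', ∀ a ∈ C n, ∀ b ∈ C n', f (n + n') (dsum a b) = dsumW (f n a) (f n' b)) ∧
  (∀ n (s : (Matrix (Fin n) (Fin n) R)ˣ), ∀ a ∈ C n,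
    simAct (s : Matrix (Fin n) (Fin n) R) a ∈ C n →
    f n (simAct (s : Matrix (Fin n) (Fin n) R) a) =
      rmulR (rmulL (s : Matrix (Fin n) (Fin n) R) (f n a))
        ((s⁻¹ : (Matrix (Fin n) (Fin n) R)ˣ) : Matrix (Fin n) (Fin n) R))

/-- `(u,v)`-admissibility of an nc set. -/
def Admissible (R : Type) [CommRing R] [Algebra R A] {m d : ℕ} (hd : d ≤ m)
    (C : ∀ n, Set (BMat A m n)) (u : Fin (m - d)) (v : Fin d) : Prop :=
  ∀ n n' (a : BMat A m n) (b : BMat A m n') (X : Matrix (Fin n) (Fin n') A),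
    a ∈ C n → b ∈ C n' →
    ∃ r : Rˣ, ins hd u v a b ((r : R) • X) ∈ C (n + n')

/-- The similarity-invariant envelope of an nc set. -/
def envC (R : Type) [CommRing R] [Algebra R A] {m d : ℕ} (hd : d ≤ m)
    (C : ∀ n, Set (BMat A m n)) : ∀ n, Set (BMat A m n) :=
  fun n => {x | ∃ (s : (Matrix (Fin n) (Fin n) R)ˣ) (a : BMat A m n),
    a ∈ C n ∧ grel m d n hd x (simAct (s : Matrix (Fin n) (Fin n) R) a)}

end NC

section Res

variable {R : Type} [CommRing R] {A : Type} [Ring A] [Algebra R A]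

/-- Entrywise inclusion `M_m(M_n(B)) → M_m(M_n(A))` for a subalgebra `B ⊆ A`. -/
def bmap (D : Subalgebra R A) {m n : ℕ} (b : BMat (↥D) m n) : BMat A m n :=
  Matrix.of fun i j => (b i j).map (fun x => (x : A))

/-- Entrywise inclusion for rectangular matrices over a subalgebra. -/
def rcmap (D : Subalgebra R A) {n n' : ℕ} (X : Matrix (Fin n) (Fin n') ↥D) :
    Matrix (Fin n) (Fin n') A :=
  X.map (fun x => (x : A))

/-- `X` is invertible in `M_m(M_n(B))` for the subalgebra `B = D ⊆ A`. -/
def invIn (D : Subalgebra R A) {m n : ℕ} (X : BMat A m n) : Prop :=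
  (∀ i j k l, X i j k l ∈ D) ∧
  ∃ Y : BMat A m n, (∀ i j k l, Y i j k l ∈ D) ∧ X * Y = 1 ∧ Y * X = 1

/-- The amplification `a^{⊕̃ n}` of an element `a ∈ M_m(A) = M_m(M_1(A))`. -/
def ampl {m : ℕ} (a : BMat A m 1) (n : ℕ) : BMat A m n :=
  Matrix.of fun i j => Matrix.diagonal (fun _ => a i j 0 0)

/-- The matrix `r^{(d;m)}(P;Q)`: first `m-d` block columns are the last `m-d` block
columns of `P`, last `d` block columns are the last `d` block columns of `Q`. -/
def rmat {m d n : ℕ} (hd : d ≤ m) (P Q : BMat A m n) : BMat A m n :=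
  Matrix.of fun i j =>
    if h : (j : ℕ) < m - d then P i ⟨d + (j : ℕ), by omega⟩ else Q i j

/-- The value `[B_{v,m-d+1},…,B_{v,m}] ⋅ ζ_u` of the `(d;m)`-Grassmannian resolvent,
where `ζ_u` is the `u`-th bottom block column of the inverse `Rinv` of an `r`-matrix. -/
def resVal {m d n : ℕ} (hd : d ≤ m) (v : Fin d) (u : Fin (m - d))
    (Bm Rinv : BMat A m n) : Mat A n :=
  ∑ j : Fin d,
    Bm ⟨(v : ℕ), lt_of_lt_of_le v.isLt hd⟩ ⟨m - d + (j : ℕ), by have := j.isLt; omega⟩ *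
    Rinv ⟨m - d + (j : ℕ), by have := j.isLt; omega⟩ ⟨d + (u : ℕ), by have := u.isLt; omega⟩

/-- Membership in the `(d;m)`-Grassmannian `B`-resolvent set of `π` (represented by `p`):
`b` represents an element of `Gr^{(d;m)}_n(B)` such that `π^{⊕n}` and `b` are
transversal in `A`. -/
def ResMem {m d : ℕ} (hd : d ≤ m) (p : BMat A m 1) (D : Subalgebra R A) {n : ℕ}
    (b : BMat (↥D) m n) : Prop :=
  IsUnit b ∧ IsUnit (rmat hd (ampl p n) (bmap D b))

end Res

section Helpers

variable {R : Type} [CommRing R] {A : Type} [Ring A] [Algebra R A]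
variable {W : Type} [AddCommMonoid W] [Module R W]

@[simp] lemma dsumMat_cc {n n' : ℕ} (X : Mat A n) (Y : Mat A n') (i j : Fin n) :
    dsumMat X Y (Fin.castAdd n' i) (Fin.castAdd n' j) = X i j := by
  simp [dsumMat, finSumFinEquiv_symm_apply_castAdd]

@[simp] lemma dsumMat_cn {n n' : ℕ} (X : Mat A n) (Y : Mat A n') (i : Fin n) (j : Fin n') :
    dsumMat X Y (Fin.castAdd n' i) (Fin.natAdd n j) = 0 := by
  simp [dsumMat, finSumFinEquiv_symm_apply_castAdd, finSumFinEquiv_symm_apply_natAdd]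

@[simp] lemma dsumMat_nc {n n' : ℕ} (X : Mat A n) (Y : Mat A n') (i : Fin n') (j : Fin n) :
    dsumMat X Y (Fin.natAdd n i) (Fin.castAdd n' j) = 0 := by
  simp [dsumMat, finSumFinEquiv_symm_apply_castAdd, finSumFinEquiv_symm_apply_natAdd]

@[simp] lemma dsumMat_nn {n n' : ℕ} (X : Mat A n) (Y : Mat A n') (i j : Fin n') :
    dsumMat X Y (Fin.natAdd n i) (Fin.natAdd n j) = Y i j := by
  simp [dsumMat, finSumFinEquiv_symm_apply_natAdd]

@[simp] lemma cornerMat_cc {n n' : ℕ} (X : Matrix (Fin n) (Fin n') A) (i j : Fin n) :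
    cornerMat X (Fin.castAdd n' i) (Fin.castAdd n' j) = 0 := by
  simp [cornerMat, finSumFinEquiv_symm_apply_castAdd]

@[simp] lemma cornerMat_cn {n n' : ℕ} (X : Matrix (Fin n) (Fin n') A) (i : Fin n) (j : Fin n') :
    cornerMat X (Fin.castAdd n' i) (Fin.natAdd n j) = X i j := by
  simp [cornerMat, finSumFinEquiv_symm_apply_castAdd, finSumFinEquiv_symm_apply_natAdd]

@[simp] lemma cornerMat_nc {n n' : ℕ} (X : Matrix (Fin n) (Fin n') A) (i : Fin n') (j : Fin n) :
    cornerMat X (Fin.natAdd n i) (Fin.castAdd n' j) = 0 := by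
  simp [cornerMat, finSumFinEquiv_symm_apply_castAdd, finSumFinEquiv_symm_apply_natAdd]

@[simp] lemma cornerMat_nn {n n' : ℕ} (X : Matrix (Fin n) (Fin n') A) (i j : Fin n') :
    cornerMat X (Fin.natAdd n i) (Fin.natAdd n j) = 0 := by
  simp [cornerMat, finSumFinEquiv_symm_apply_natAdd]

@[simp] lemma dsumW_cc {n n' : ℕ} (X : Matrix (Fin n) (Fin n) W) (Y : Matrix (Fin n') (Fin n') W)
    (i j : Fin n) : dsumW X Y (Fin.castAdd n' i) (Fin.castAdd n' j) = X i j := by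
  simp [dsumW, finSumFinEquiv_symm_apply_castAdd]

@[simp] lemma dsumW_cn {n n' : ℕ} (X : Matrix (Fin n) (Fin n) W) (Y : Matrix (Fin n') (Fin n') W)
    (i : Fin n) (j : Fin n') : dsumW X Y (Fin.castAdd n' i) (Fin.natAdd n j) = 0 := by
  simp [dsumW, finSumFinEquiv_symm_apply_castAdd, finSumFinEquiv_symm_apply_natAdd]

@[simp] lemma dsumW_nc {n n' : ℕ} (X : Matrix (Fin n) (Fin n) W) (Y : Matrix (Fin n') (Fin n') W)
    (i : Fin n') (j : Fin n) : dsumW X Y (Fin.natAdd n i) (Fin.castAdd n' j) = 0 := by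
  simp [dsumW, finSumFinEquiv_symm_apply_castAdd, finSumFinEquiv_symm_apply_natAdd]

@[simp] lemma dsumW_nn {n n' : ℕ} (X : Matrix (Fin n) (Fin n) W) (Y : Matrix (Fin n') (Fin n') W)
    (i j : Fin n') : dsumW X Y (Fin.natAdd n i) (Fin.natAdd n j) = Y i j := by
  simp [dsumW, finSumFinEquiv_symm_apply_natAdd]

@[simp] lemma triW_cc {n n' : ℕ} (P : Matrix (Fin n) (Fin n) W) (H : Matrix (Fin n) (Fin n') W)
    (Q : Matrix (Fin n') (Fin n') W) (i j : Fin n) :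
    triW P H Q (Fin.castAdd n' i) (Fin.castAdd n' j) = P i j := by
  simp [triW, finSumFinEquiv_symm_apply_castAdd]

@[simp] lemma triW_cn {n n' : ℕ} (P : Matrix (Fin n) (Fin n) W) (H : Matrix (Fin n) (Fin n') W)
    (Q : Matrix (Fin n') (Fin n') W) (i : Fin n) (j : Fin n') :
    triW P H Q (Fin.castAdd n' i) (Fin.natAdd n j) = H i j := by
  simp [triW, finSumFinEquiv_symm_apply_castAdd, finSumFinEquiv_symm_apply_natAdd]

@[simp] lemma triW_nc {n n' : ℕ} (P : Matrix (Fin n) (Fin n) W) (H : Matrix (Fin n) (Fin n') W)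
    (Q : Matrix (Fin n') (Fin n') W) (i : Fin n') (j : Fin n) :
    triW P H Q (Fin.natAdd n i) (Fin.castAdd n' j) = 0 := by
  simp [triW, finSumFinEquiv_symm_apply_castAdd, finSumFinEquiv_symm_apply_natAdd]

@[simp] lemma triW_nn {n n' : ℕ} (P : Matrix (Fin n) (Fin n) W) (H : Matrix (Fin n) (Fin n') W)
    (Q : Matrix (Fin n') (Fin n') W) (i j : Fin n') :
    triW P H Q (Fin.natAdd n i) (Fin.natAdd n j) = Q i j := by
  simp [triW, finSumFinEquiv_symm_apply_natAdd]

end Helpers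

section Helpers2

variable {R : Type} [CommRing R] {A : Type} [Ring A] [Algebra R A]
variable {W : Type} [AddCommMonoid W] [Module R W]

/-- The block lower unitriangular matrix `[[1,0],[S,1]]` reindexed to `Fin (q+p)`. -/
def lowTri {α : Type} [Zero α] [One α] {q p : ℕ} (S : Matrix (Fin p) (Fin q) α) :
    Matrix (Fin (q + p)) (Fin (q + p)) α :=
  (Matrix.fromBlocks 1 0 S 1).submatrix finSumFinEquiv.symm finSumFinEquiv.symm

@[simp] lemma lowTri_cc {α : Type} [Zero α] [One α] {q p : ℕ} (S : Matrix (Fin p) (Fin q) α)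
    (i j : Fin q) : lowTri S (Fin.castAdd p i) (Fin.castAdd p j) = (1 : Matrix (Fin q) (Fin q) α) i j := by
  simp [lowTri, finSumFinEquiv_symm_apply_castAdd]

@[simp] lemma lowTri_cn {α : Type} [Zero α] [One α] {q p : ℕ} (S : Matrix (Fin p) (Fin q) α)
    (i : Fin q) (j : Fin p) : lowTri S (Fin.castAdd p i) (Fin.natAdd q j) = 0 := by
  simp [lowTri, finSumFinEquiv_symm_apply_castAdd, finSumFinEquiv_symm_apply_natAdd]

@[simp] lemma lowTri_nc {α : Type} [Zero α] [One α] {q p : ℕ} (S : Matrix (Fin p) (Fin q) α)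
    (i : Fin p) (j : Fin q) : lowTri S (Fin.natAdd q i) (Fin.castAdd p j) = S i j := by
  simp [lowTri, finSumFinEquiv_symm_apply_castAdd, finSumFinEquiv_symm_apply_natAdd]

@[simp] lemma lowTri_nn {α : Type} [Zero α] [One α] {q p : ℕ} (S : Matrix (Fin p) (Fin q) α)
    (i j : Fin p) : lowTri S (Fin.natAdd q i) (Fin.natAdd q j) = (1 : Matrix (Fin p) (Fin p) α) i j := by
  simp [lowTri, finSumFinEquiv_symm_apply_natAdd]

lemma lowTri_mul_lowTri_neg {α : Type} [Ring α] {q p : ℕ} (S : Matrix (Fin p) (Fin q) α) :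
    lowTri S * lowTri (-S) = 1 := by
  unfold lowTri
  rw [Matrix.submatrix_mul_equiv, Matrix.fromBlocks_multiply]
  simp [Matrix.submatrix_one_equiv]

lemma lowTri_neg_mul_lowTri {α : Type} [Ring α] {q p : ℕ} (S : Matrix (Fin p) (Fin q) α) :
    lowTri (-S) * lowTri S = 1 := by
  unfold lowTri
  rw [Matrix.submatrix_mul_equiv, Matrix.fromBlocks_multiply]
  simp [Matrix.submatrix_one_equiv]

lemma lowTri_map {q p : ℕ} (S : Matrix (Fin p) (Fin q) R) :
    (lowTri S).map (algebraMap R A) = lowTri (S.map (algebraMap R A)) := by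
  unfold lowTri
  rw [← Matrix.submatrix_map, Matrix.fromBlocks_map]
  congr 1 <;> ext i j <;> simp [Matrix.one_apply, apply_ite (algebraMap R A)]

/-- intertwining entrywise: `lowTri` commutes with `dsumMat` -/
lemma lowTri_comm_dsumMat {q p : ℕ} (S : Matrix (Fin p) (Fin q) A)
    (P : Mat A q) (Q : Mat A p) (h : S * P = Q * S) :
    lowTri S * dsumMat P Q = dsumMat P Q * lowTri S := by
  unfold lowTri dsumMat
  rw [Matrix.reindex_apply, Matrix.submatrix_mul_equiv, Matrix.submatrix_mul_equiv,
    Matrix.fromBlocks_multiply, Matrix.fromBlocks_multiply]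
  simp [h]

lemma rmulR_rmulR {p q r s : ℕ} (X : Matrix (Fin p) (Fin q) W)
    (S : Matrix (Fin q) (Fin r) R) (T : Matrix (Fin r) (Fin s) R) :
    rmulR (rmulR X S) T = rmulR X (S * T) := by
  ext i j
  simp only [rmulR, Matrix.of_apply, Finset.smul_sum, Matrix.mul_apply, Finset.sum_smul,
    smul_smul]
  rw [Finset.sum_comm]
  refine Finset.sum_congr rfl fun k _ => Finset.sum_congr rfl fun l _ => ?_
  rw [mul_comm]

@[simp] lemma rmulR_one {p q : ℕ} (X : Matrix (Fin p) (Fin q) W) :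
    rmulR X (1 : Matrix (Fin q) (Fin q) R) = X := by
  ext i j
  simp [rmulR, Matrix.one_apply, ite_smul]

end Helpers2



section Helpers3

variable {R : Type} [CommRing R] {A : Type} [Ring A] [Algebra R A]
variable {W : Type} [AddCommMonoid W] [Module R W]

lemma isUnit_diagonal_const {N k : ℕ} {c c' : Mat A N} (h1 : c * c' = 1) (h2 : c' * c = 1) :
    IsUnit (Matrix.diagonal (fun _ : Fin k => c)) :=
  ⟨⟨Matrix.diagonal (fun _ : Fin k => c), Matrix.diagonal (fun _ : Fin k => c'),
    by simp [Matrix.diagonal_mul_diagonal, h1], by simp [Matrix.diagonal_mul_diagonal, h2]⟩, rfl⟩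

lemma corner_diag_const {k m N : ℕ} (c : Mat A N) (φ : Fin k → Fin m)
    (hφ : Function.Injective φ) :
    (Matrix.of fun i j : Fin k => Matrix.diagonal (fun _ : Fin m => c) (φ i) (φ j)) =
      Matrix.diagonal (fun _ : Fin k => c) := by
  ext i j
  rcases eq_or_ne i j with rfl | hij
  · simp
  · simp [Matrix.diagonal_apply_ne _ (fun h => hij (hφ h)), Matrix.diagonal_apply_ne _ hij]

lemma memH_diag_const {m d N : ℕ} (hd : d ≤ m) {g g' : Mat A N}
    (h1 : g * g' = 1) (h2 : g' * g = 1) :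
    memH m d N hd (Matrix.diagonal fun _ : Fin m => g) := by
  have hext : ∀ (k : ℕ) (φ : Fin k → Fin m), Function.Injective φ →
      IsUnit (Matrix.of fun i j : Fin k =>
        Matrix.diagonal (fun _ : Fin m => g) (φ i) (φ j)) := by
    intro k φ hφ
    rw [corner_diag_const (A := A) g φ hφ]
    exact isUnit_diagonal_const h1 h2
  refine ⟨isUnit_diagonal_const h1 h2,
    fun i j hi hj => Matrix.diagonal_apply_ne _ (by intro hij; rw [hij] at hi; omega),
    hext _ _ ?_, hext _ _ ?_⟩
  · intro i j hij
    simp only [Fin.mk.injEq] at hij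
    exact Fin.ext hij
  · intro i j hij
    simp only [Fin.mk.injEq] at hij
    exact Fin.ext (by omega)

lemma sandwich {N : ℕ} (s : (Matrix (Fin N) (Fin N) R)ˣ) (Y : Matrix (Fin N) (Fin N) W)
    (h : rmulR (rmulL (s : Matrix (Fin N) (Fin N) R) Y)
      ((s⁻¹ : (Matrix (Fin N) (Fin N) R)ˣ) : Matrix (Fin N) (Fin N) R) = Y) :
    rmulR Y (s : Matrix (Fin N) (Fin N) R) = rmulL (s : Matrix (Fin N) (Fin N) R) Y := by
  conv_lhs => rw [← h]
  rw [rmulR_rmulR, Units.inv_mul, rmulR_one]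

lemma intertwine {m d : ℕ} (hd : d ≤ m) (C : ∀ n, Set (BMat A m n))
    (hC : IsNCSetCarrier hd C)
    (f : ∀ n, BMat A m n → Matrix (Fin n) (Fin n) W) (hf : IsNCFun R hd C f)
    {q p : ℕ} (S : Matrix (Fin p) (Fin q) R)
    (Y : BMat A m q) (hY : Y ∈ C q) (Y' : BMat A m p) (hY' : Y' ∈ C p)
    (h : ∀ i j, (S.map (algebraMap R A)) * Y i j = Y' i j * (S.map (algebraMap R A))) :
    rmulL S (f q Y) = rmulR (f p Y') S := by
  set gS := S.map (algebraMap R A) with hgS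
  set sU : (Matrix (Fin (q + p)) (Fin (q + p)) R)ˣ :=
    ⟨lowTri S, lowTri (-S), lowTri_mul_lowTri_neg S, lowTri_neg_mul_lowTri S⟩ with hsU
  set D := dsum Y Y' with hD
  have hDC : D ∈ C (q + p) := hC.2.2 q p Y hY Y' hY'
  have key : simAct (lowTri S) D = D * Matrix.diagonal (fun _ : Fin m => lowTri gS) := by
    funext i j
    rw [Matrix.mul_diagonal]
    show (lowTri S).map (algebraMap R A) * dsumMat (Y i j) (Y' i j)
      = dsumMat (Y i j) (Y' i j) * lowTri gS
    rw [lowTri_map]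
    exact lowTri_comm_dsumMat gS _ _ (h i j)
  have hmemH : memH m d (q + p) hd (Matrix.diagonal fun _ : Fin m => lowTri gS) :=
    memH_diag_const hd (lowTri_mul_lowTri_neg gS) (lowTri_neg_mul_lowTri gS)
  have hg : grel m d (q + p) hd (simAct (lowTri S) D) D := ⟨_, hmemH, key⟩
  have hmem' : simAct (lowTri S) D ∈ C (q + p) := (hC.2.1 _ _ _ hg).mpr hDC
  have h1 : f (q + p) (simAct (sU : Matrix (Fin (q + p)) (Fin (q + p)) R) D)
      = rmulR (rmulL (sU : Matrix (Fin (q + p)) (Fin (q + p)) R) (f (q + p) D))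
        ((sU⁻¹ : (Matrix (Fin (q + p)) (Fin (q + p)) R)ˣ) : Matrix (Fin (q + p)) (Fin (q + p)) R) :=
    hf.2.2 (q + p) sU D hDC hmem'
  have h2 : f (q + p) (simAct (sU : Matrix (Fin (q + p)) (Fin (q + p)) R) D) = f (q + p) D :=
    hf.1 _ _ hmem' _ hDC hg
  have h3 : rmulR (f (q + p) D) (sU : Matrix (Fin (q + p)) (Fin (q + p)) R)
      = rmulL (sU : Matrix (Fin (q + p)) (Fin (q + p)) R) (f (q + p) D) :=
    sandwich sU _ (by rw [← h1, h2])
  have h4 : f (q + p) D = dsumW (f q Y) (f p Y') := hf.2.1 q p Y hY Y' hY'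
  have hval : ((↑sU : Matrix (Fin (q + p)) (Fin (q + p)) R)) = lowTri S := rfl
  ext i j
  have h5 := congrFun (congrFun h3 (Fin.natAdd q i)) (Fin.castAdd p j)
  simp only [rmulR, rmulL, Matrix.of_apply, h4, hval, Fin.sum_univ_add,
    lowTri_cc, lowTri_cn, lowTri_nc, lowTri_nn, dsumW_cc, dsumW_cn, dsumW_nc, dsumW_nn,
    smul_zero, zero_smul, Finset.sum_const_zero, add_zero, zero_add] at h5
  simpa [rmulR, rmulL] using h5.symm

end Helpers3

section Helpers4

variable {R : Type} [CommRing R] {A : Type} [Ring A] [Algebra R A]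

/-- The injection `[I; 0] : Fin (n+n') × Fin n`. -/
def incM (α : Type) [Zero α] [One α] (n n' : ℕ) : Matrix (Fin (n + n')) (Fin n) α :=
  Matrix.of fun i j => if (i : ℕ) = (j : ℕ) then 1 else 0

/-- The projection `[0, I] : Fin n' × Fin (n+n')`. -/
def prjM (α : Type) [Zero α] [One α] (n n' : ℕ) : Matrix (Fin n') (Fin (n + n')) α :=
  Matrix.of fun i j => if (n + (i : ℕ)) = (j : ℕ) then 1 else 0

variable {α : Type} [Zero α] [One α] {n n' : ℕ}

@[simp] lemma incM_c (i : Fin n) (j : Fin n) :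
    incM α n n' (Fin.castAdd n' i) j = if i = j then 1 else 0 := by
  simp [incM, Fin.ext_iff]

@[simp] lemma incM_n (i : Fin n') (j : Fin n) :
    incM α n n' (Fin.natAdd n i) j = 0 := by
  simp only [incM, Fin.coe_natAdd, Matrix.of_apply]
  rw [if_neg (by omega)]

@[simp] lemma prjM_c (i : Fin n') (j : Fin n) :
    prjM α n n' i (Fin.castAdd n' j) = 0 := by
  simp only [prjM, Fin.coe_castAdd, Matrix.of_apply]
  rw [if_neg (by omega)]

@[simp] lemma prjM_n (i : Fin n') (j : Fin n') :
    prjM α n n' i (Fin.natAdd n j) = if i = j then 1 else 0 := by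
  simp [prjM, Fin.ext_iff]

@[simp] lemma incM_map : (incM R n n').map (algebraMap R A) = incM A n n' := by
  ext i j
  simp [incM, Matrix.map_apply, apply_ite (algebraMap R A)]

@[simp] lemma prjM_map : (prjM R n n').map (algebraMap R A) = prjM A n n' := by
  ext i j
  simp [prjM, Matrix.map_apply, apply_ite (algebraMap R A)]

end Helpers4

/-- existence and uniqueness of the nc difference-differential value. -/
theorem diff_value_exists_unique {R : Type} [CommRing R] {A : Type} [Ring A] [Algebra R A]
    {W : Type} [AddCommMonoid W] [Module R W]
    (m d : ℕ) (hd1 : 1 ≤ d) (hd : d ≤ m)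
    (C : ∀ n, Set (BMat A m n)) (hC : IsNCSetCarrier hd C)
    (f : ∀ n, BMat A m n → Matrix (Fin n) (Fin n) W) (hf : IsNCFun R hd C f)
    (u : Fin (m - d)) (v : Fin d) {n n' : ℕ}
    (a : BMat A m n) (ha : a ∈ C n) (b : BMat A m n') (hb : b ∈ C n')
    (X : Matrix (Fin n) (Fin n') A) (hmem : ins hd u v a b X ∈ C (n + n')) :
    ∃! H : Matrix (Fin n) (Fin n') W,
      f (n + n') (ins hd u v a b X) = triW (f n a) H (f n' b) := by
  set Z := ins hd u v a b X with hZdef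
  have hZ : ∀ k l, Z k l = dsumMat (a k l) (b k l) +
      (if ((k : ℕ) = d + (u : ℕ) ∧ m - d ≤ (l : ℕ)) then
        cornerMat (X * b ⟨(v : ℕ), lt_of_lt_of_le v.isLt hd⟩ l) else 0) := fun k l => rfl
  have hι : ∀ k l : Fin m, ((incM R n n').map (algebraMap R A)) * a k l
      = Z k l * ((incM R n n').map (algebraMap R A)) := by
    intro k l
    rw [incM_map]
    ext i j
    rw [Matrix.mul_apply, Matrix.mul_apply]
    simp only [hZ, Matrix.add_apply]
    induction i using Fin.addCases with
    | left i₀ =>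
      split_ifs with hc <;>
        simp [Fin.sum_univ_add, Matrix.add_apply, ite_mul, mul_ite, Matrix.zero_apply]
    | right i₁ =>
      split_ifs with hc <;>
        simp [Fin.sum_univ_add, Matrix.add_apply, ite_mul, mul_ite, Matrix.zero_apply]
  have hτ : ∀ k l : Fin m, ((prjM R n n').map (algebraMap R A)) * Z k l
      = b k l * ((prjM R n n').map (algebraMap R A)) := by
    intro k l
    rw [prjM_map]
    ext i j
    rw [Matrix.mul_apply, Matrix.mul_apply]
    simp only [hZ, Matrix.add_apply]
    induction j using Fin.addCases with
    | left j₀ =>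
      split_ifs with hc <;>
        simp [Fin.sum_univ_add, Matrix.add_apply, ite_mul, mul_ite, Matrix.zero_apply]
    | right j₁ =>
      split_ifs with hc <;>
        simp [Fin.sum_univ_add, Matrix.add_apply, ite_mul, mul_ite, Matrix.zero_apply]
  have eq1 : rmulL (incM R n n') (f n a) = rmulR (f (n + n') Z) (incM R n n') :=
    intertwine hd C hC f hf (incM R n n') a ha Z hmem hι
  have eq2 : rmulL (prjM R n n') (f (n + n') Z) = rmulR (f n' b) (prjM R n n') :=
    intertwine hd C hC f hf (prjM R n n') Z hmem b hb hτ
  set F := f (n + n') Z with hF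
  have fact1 : ∀ (i j : Fin n), F (Fin.castAdd n' i) (Fin.castAdd n' j) = f n a i j := by
    intro i j
    have h5 := congrFun (congrFun eq1 (Fin.castAdd n' i)) j
    simp only [rmulL, rmulR, Matrix.of_apply, Fin.sum_univ_add, incM_c, incM_n,
      ite_smul, one_smul, zero_smul, smul_zero, Finset.sum_ite_eq, Finset.sum_ite_eq',
      Finset.mem_univ, if_true, Finset.sum_const_zero, add_zero, zero_add] at h5
    exact h5.symm
  have fact2 : ∀ (i : Fin n') (j : Fin n), F (Fin.natAdd n i) (Fin.castAdd n' j) = 0 := by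
    intro i j
    have h5 := congrFun (congrFun eq1 (Fin.natAdd n i)) j
    simp only [rmulL, rmulR, Matrix.of_apply, Fin.sum_univ_add, incM_c, incM_n,
      ite_smul, one_smul, zero_smul, smul_zero, Finset.sum_ite_eq, Finset.sum_ite_eq',
      Finset.mem_univ, if_true, Finset.sum_const_zero, add_zero, zero_add] at h5
    exact h5.symm
  have fact3 : ∀ (i j : Fin n'), F (Fin.natAdd n i) (Fin.natAdd n j) = f n' b i j := by
    intro i j
    have h5 := congrFun (congrFun eq2 i) (Fin.natAdd n j)
    simp only [rmulL, rmulR, Matrix.of_apply, Fin.sum_univ_add, prjM_c, prjM_n,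
      ite_smul, one_smul, zero_smul, smul_zero, Finset.sum_ite_eq, Finset.sum_ite_eq',
      Finset.mem_univ, if_true, Finset.sum_const_zero, add_zero, zero_add] at h5
    exact h5
  have main : F = triW (f n a)
      (Matrix.of fun i j => F (Fin.castAdd n' i) (Fin.natAdd n j)) (f n' b) := by
    ext i j
    induction i using Fin.addCases with
    | left i₀ =>
      induction j using Fin.addCases with
      | left j₀ => rw [triW_cc]; exact fact1 i₀ j₀
      | right j₁ => rw [triW_cn]; rfl
    | right i₁ =>
      induction j using Fin.addCases with
      | left j₀ => rw [triW_nc]; exact fact2 i₁ j₀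
      | right j₁ => rw [triW_nn]; exact fact3 i₁ j₁
  refine ⟨Matrix.of fun i j => F (Fin.castAdd n' i) (Fin.natAdd n j), main, ?_⟩
  intro H' hH'
  ext i j
  have h6 := congrFun (congrFun (hH'.symm.trans main) (Fin.castAdd n' i)) (Fin.natAdd n j)
  simpa only [triW_cn, Matrix.of_apply] using h6
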